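/- arXiv:2512.14680 — 3 statements merged into one kernel-verified Lean document; each statement's English description precedes it below -/
import Mathlib

section
/- For γ ∈ (0,1), δ ∈ (-γ,0), and a₃ < δ(1-γ)/γ - γ, the quantity (γ/(2δ))·(a₃ + δ + √((a₃+δ)² + 4δ)) is strictly less than (|γ²+δ| - γ² + δ)/(2δ), which in turn is at most 1. -/
theorem stmt_3 (γ δ a₃ : ℝ) (hγ0 : 0 < γ) (hγ1 : γ < 1) (hδ1 : -γ < δ) (hδ0 : δ < 0)
    (ha₃ : a₃ < δ * (1 - γ) / γ - γ) (hsq : 0 ≤ (a₃ + δ) ^ 2 + 4 * δ) :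
    γ / (2 * δ) * (a₃ + δ + Real.sqrt ((a₃ + δ) ^ 2 + 4 * δ))
      < (|γ ^ 2 + δ| - γ ^ 2 + δ) / (2 * δ) ∧
    (|γ ^ 2 + δ| - γ ^ 2 + δ) / (2 * δ) ≤ 1 := by
  set s := Real.sqrt ((a₃ + δ) ^ 2 + 4 * δ) with hsdef
  have hs : s ^ 2 = (a₃ + δ) ^ 2 + 4 * δ := Real.sq_sqrt hsq
  have hsnn : 0 ≤ s := Real.sqrt_nonneg _
  have h2δ : 2 * δ < 0 := by linarith
  have h1 : (a₃ + γ) * γ < δ * (1 - γ) := by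
    rw [← lt_div_iff₀ hγ0]; linarith
  have hkey : γ * (a₃ + δ) < δ - γ ^ 2 := by nlinarith
  constructor
  · rw [div_mul_eq_mul_div γ (2*δ), div_lt_div_right_of_neg h2δ]
    rcases le_or_gt 0 (γ ^ 2 + δ) with h | h
    · rw [abs_of_nonneg h]
      have hC : 0 < 2 * δ - γ * (a₃ + δ) := by nlinarith
      have hsqC : (2 * δ - γ * (a₃ + δ)) ^ 2 < (γ * s) ^ 2 := by nlinarith
      have hγs : 0 ≤ γ * s := mul_nonneg hγ0.le hsnn
      nlinarith
    · rw [abs_of_neg h]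
      rcases le_or_gt 0 (-(a₃ + δ) - 2 * γ) with hC | hC
      · have hsqC : (-(a₃ + δ) - 2 * γ) ^ 2 < s ^ 2 := by nlinarith
        nlinarith
      · nlinarith
  · rcases le_or_gt 0 (γ ^ 2 + δ) with h | h
    · rw [abs_of_nonneg h]
      rw [div_le_one_of_neg h2δ] <;> linarith
    · rw [abs_of_neg h]
      rw [div_le_one_of_neg h2δ] <;> nlinarith
end

section
/- For γ ∈ (0,1), δ ∈ (-γ,0), a₃ ≤ δ(1-γ)/γ - γ, and y₀ ∈ (0,1), the expression γ(1+γ)/y₀ + ((2γ+1)y₀ - (1+γ))/(y₀(1-y₀)) + (δ(1-γ)/γ - γ)/(1-y₀) + δy₀(1 - 1/γ)/(1-y₀) equals (γ-1)(γ² + γ - δy₀)/(γy₀) and is strictly negative. -/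
theorem stmt_5 (γ δ y₀ : ℝ) (hγ0 : 0 < γ) (hγ1 : γ < 1) (hδ1 : -γ < δ) (hδ0 : δ < 0)
    (hy0 : 0 < y₀) (hy1 : y₀ < 1) :
    γ * (1 + γ) / y₀ + ((2 * γ + 1) * y₀ - (1 + γ)) / (y₀ * (1 - y₀))
      + (δ * (1 - γ) / γ - γ) / (1 - y₀) + δ * y₀ * (1 - 1 / γ) / (1 - y₀)
      = (γ - 1) * (γ ^ 2 + γ - δ * y₀) / (γ * y₀) ∧
    (γ - 1) * (γ ^ 2 + γ - δ * y₀) / (γ * y₀) < 0 := by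
  have h1 : (1:ℝ) - y₀ > 0 := by linarith
  constructor
  · field_simp
    ring
  · apply div_neg_of_neg_of_pos
    · have : γ ^ 2 + γ - δ * y₀ > 0 := by nlinarith
      nlinarith
    · positivity
end

section
/- For γ ∈ (0,1), δ ∈ (-γ,0), and A ≥ 1, the cubic equation γl - Al² + δl²(1 - l/γ) = 0 has exactly one solution l in (0,1), given by l = (γ/(2δ))(δ - A + √((A-δ)² + 4δ)), and this root satisfies l ≤ γ. -/
theorem stmt_9 (γ δ A : ℝ) (hγ0 : 0 < γ) (hγ1 : γ < 1) (hδ1 : -γ < δ) (hδ0 : δ < 0)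
    (hA : 1 ≤ A) :
    let l₀ := γ / (2 * δ) * (δ - A + Real.sqrt ((A - δ) ^ 2 + 4 * δ))
    (0 < l₀ ∧ l₀ < 1 ∧ γ * l₀ - A * l₀ ^ 2 + δ * l₀ ^ 2 * (1 - l₀ / γ) = 0 ∧ l₀ ≤ γ) ∧
    ∀ l : ℝ, 0 < l → l < 1 → γ * l - A * l ^ 2 + δ * l ^ 2 * (1 - l / γ) = 0 → l = l₀ := by
  intro l₀
  have hγne : γ ≠ 0 := ne_of_gt hγ0
  have hδne : δ ≠ 0 := ne_of_lt hδ0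
  set s := Real.sqrt ((A - δ) ^ 2 + 4 * δ) with hs
  have hD : 0 < (A - δ) ^ 2 + 4 * δ := by nlinarith
  have hs0 : 0 < s := Real.sqrt_pos.mpr hD
  have hs2 : s ^ 2 = (A - δ) ^ 2 + 4 * δ := Real.sq_sqrt hD.le
  have hslt : s < A - δ := by nlinarith
  have hl0def : l₀ = γ / (2 * δ) * (δ - A + s) := rfl
  -- positivity
  have hcoef : γ / (2 * δ) < 0 := div_neg_of_pos_of_neg hγ0 (by linarith)
  have hl0pos : 0 < l₀ := by
    rw [hl0def]
    exact mul_pos_of_neg_of_neg hcoef (by linarith)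
  -- l₀ ≤ γ
  have hsge : A + δ ≤ s := by nlinarith [sq_nonneg (s + A + δ), sq_nonneg (s - A - δ)]
  have hl0le : l₀ ≤ γ := by
    rw [hl0def]
    rw [div_mul_eq_mul_div, div_le_iff_of_neg (by linarith : 2 * δ < 0)]
    nlinarith
  have hl0lt1 : l₀ < 1 := lt_of_le_of_lt hl0le hγ1
  -- quadratic
  have hq : δ * l₀ ^ 2 + (A - δ) * γ * l₀ - γ ^ 2 = 0 := by
    rw [hl0def]
    field_simp
    linear_combination (γ^2) * hs2
  clear_value l₀
  have heq0 : γ * l₀ - A * l₀ ^ 2 + δ * l₀ ^ 2 * (1 - l₀ / γ) = 0 := by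
    field_simp
    linear_combination (-l₀) * hq
  refine ⟨⟨hl0pos, hl0lt1, heq0, hl0le⟩, ?_⟩
  intro l hl0 hl1 heq
  have hql : δ * l ^ 2 + (A - δ) * γ * l - γ ^ 2 = 0 := by
    have h2 : l * (δ * l ^ 2 + (A - δ) * γ * l - γ ^ 2) = 0 := by
      field_simp at heq
      linear_combination -heq
    rcases mul_eq_zero.mp h2 with h | h
    · exact absurd h (ne_of_gt hl0)
    · exact h
  have hfac : (l - l₀) * (δ * (l + l₀) + (A - δ) * γ) = 0 := by
    linear_combination hql - hq
  rcases mul_eq_zero.mp hfac with h | h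
  · linarith
  · exfalso
    nlinarith [mul_pos (show (0:ℝ) < 1 - l by linarith) (show (0:ℝ) < 1 - l₀ by linarith)]
end
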